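/- arXiv:1809.06921 — 5 statements merged into one kernel-verified Lean document; each statement's English description precedes it below -/
import Mathlib

section
/- Let f be a q-periodic arithmetical function with values in ℂ. If ∑_{a=1}^{q} f(a) = 0, then the series ∑_{n=1}^∞ f(n)/n converges. -/
/-!
Since `f` sums to zero over a period, its partial sums are themselves `q`-periodic, hence bounded,
and Dirichlet's test with the antitone weights `1 / n → 0` gives convergence.
-/

open Finset Filter Topology

theorem Finset.sum_Icc_one_eq_sum_range {M : Type*} [AddCommMonoid M] (g : ℕ → M) (N : ℕ) :
    ∑ n ∈ Icc 1 N, g n = ∑ i ∈ range N, g (i + 1) := by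
  rw [← Ico_add_one_right_eq_Icc, sum_Ico_eq_sum_range, Nat.add_sub_cancel]
  simp only [add_comm 1]

namespace Function.Periodic

section AddCommMonoid

variable {M : Type*} [AddCommMonoid M] {g : ℕ → M} {q : ℕ}

theorem sum_range_period_add (hg : Periodic g q) (n : ℕ) :
    ∑ i ∈ range (q + n), g i = ∑ i ∈ range q, g i + ∑ i ∈ range n, g i := by
  rw [sum_range_add]
  congr 1
  exact sum_congr rfl fun i _ => by rw [add_comm, hg]

theorem periodic_sum_range_of_sum_range_eq_zero (hg : Periodic g q)
    (hzero : ∑ i ∈ range q, g i = 0) : Periodic (fun n => ∑ i ∈ range n, g i) q := fun n => by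
  simp only [add_comm n, hg.sum_range_period_add, hzero, zero_add]

end AddCommMonoid

theorem norm_sum_range_le_of_sum_range_eq_zero {E : Type*} [SeminormedAddCommGroup E]
    {g : ℕ → E} {q : ℕ} (hg : Periodic g q) (hq : 0 < q) (hzero : ∑ i ∈ range q, g i = 0)
    (n : ℕ) : ‖∑ i ∈ range n, g i‖ ≤ ∑ i ∈ range q, ‖g i‖ := by
  rw [← (hg.periodic_sum_range_of_sum_range_eq_zero hzero).map_mod_nat n]
  refine (norm_sum_le _ _).trans (sum_le_sum_of_subset_of_nonneg ?_ fun i _ _ => norm_nonneg _)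
  exact range_subset_range.mpr (Nat.mod_lt n hq).le

end Function.Periodic

theorem cauchySeq_sum_range_inv_succ_smul_of_bounded {E : Type*} [NormedAddCommGroup E]
    [NormedSpace ℝ E] {z : ℕ → E} {b : ℝ} (hb : ∀ n, ‖∑ i ∈ range n, z i‖ ≤ b) :
    CauchySeq fun n => ∑ i ∈ range n, ((i : ℝ) + 1)⁻¹ • z i := by
  refine Antitone.cauchySeq_series_mul_of_tendsto_zero_of_bounded ?_ ?_ hb
  · exact fun m n hmn => inv_anti₀ (by positivity) (by gcongr)
  · simpa only [one_div] using tendsto_one_div_add_atTop_nhds_zero_nat (𝕜 := ℝ)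

/-- If `f` is `q`-periodic and `∑_{a=1}^q f a = 0`, then `∑_{n≥1} f n / n` converges. -/
theorem converges_of_periodic_sum_zero (q : ℕ) (hq : 0 < q) (f : ℕ → ℂ)
    (hper : ∀ n : ℕ, f (n + q) = f n)
    (hsum : ∑ a ∈ Finset.Icc 1 q, f a = 0) :
    ∃ l : ℂ, Tendsto (fun N : ℕ => ∑ n ∈ Finset.Icc 1 N, f n / n) atTop (𝓝 l) := by
  have hshift : Function.Periodic (fun i => f (i + 1)) q := fun i => by
    simpa only [add_right_comm] using hper (i + 1)
  rw [sum_Icc_one_eq_sum_range] at hsum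
  obtain ⟨l, hl⟩ := cauchySeq_tendsto_of_complete <| cauchySeq_sum_range_inv_succ_smul_of_bounded
    (hshift.norm_sum_range_le_of_sum_range_eq_zero hq hsum)
  refine ⟨l, hl.congr fun N => ?_⟩
  rw [sum_Icc_one_eq_sum_range]
  simp [Complex.real_smul, div_eq_inv_mul]
end

section
/- Let f be an odd q-periodic arithmetical function (f(q-n) = -f(n) for all n) with f(q) = 0 and f̂(q) = 0. Then L(1,f) = ∑_{n=1}^∞ f(n)/n = -(iπ/q) ∑_{a=1}^{q} a f̂(a), where f̂ is the Fourier transform of f. -/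
/-!
Fourier inversion on `ℤ/qℤ` writes `f n = ∑ₖ f̂ k ζᵏⁿ` with `ζ = e^{2πi/q}`, so `L(1,f)` is the
combination `∑ₖ f̂ k · (-log (1 - ζᵏ))` of boundary values of the logarithmic series; these exist
for `ζᵏ ≠ 1` by Dirichlet's test and are identified by Abel's theorem, while `f̂ 0 = 0` removes
the divergent term. As `f̂` is odd, pairing `k` with `-k` leaves only the imaginary parts
`arg (1 - e^{iθ}) = (θ - π)/2` of the logarithms, and the constant `π` drops out because
`∑ₖ f̂ k = 0`.
-/

open Finset Filter Topology Complex ComplexConjugate ZMod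
open scoped Real

namespace Finset

variable {M : Type*} [AddCommMonoid M]

theorem sum_range_succ_eq_add_sum_Icc (g : ℕ → M) (n : ℕ) :
    ∑ i ∈ range (n + 1), g i = g 0 + ∑ i ∈ Icc 1 n, g i := by
  rw [range_eq_Ico, sum_eq_sum_Ico_succ_bot (by omega), zero_add, Ico_add_one_right_eq_Icc]

theorem sum_Icc_one_eq_sum_range_s7 {g : ℕ → M} {q : ℕ}
    (hg : g q = g 0) : ∑ a ∈ Icc 1 q, g a = ∑ a ∈ range q, g a := by
  cases q with
  | zero => rfl
  | succ m => rw [sum_range_succ_eq_add_sum_Icc, sum_Icc_succ_top (by omega), hg, add_comm]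

end Finset

namespace Complex

theorem log_conj_sub_log {w : ℂ} (h : w.arg ≠ π) :
    log (conj w) - log w = -(2 * w.arg) * I := by
  rw [log_conj w h, ← neg_sub, RCLike.sub_conj]
  simp [log_im]

theorem one_sub_exp_mul_I (θ : ℝ) :
    1 - exp (θ * I) = ↑(2 * Real.sin (θ / 2)) * exp (↑((θ - π) / 2) * I) := by
  have hu : exp (θ * I) = exp (θ / 2 * I) * exp (θ / 2 * I) := by rw [← exp_add]; ring_nf
  have hvu : exp (-(θ / 2 * I)) * exp (θ / 2 * I) = 1 := by rw [← exp_add]; simp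
  have hw : exp (↑((θ - π) / 2) * I) = exp (θ / 2 * I) * -I := by
    have hI : exp (-(π / 2 * I)) = -I := by rw [exp_neg, exp_pi_div_two_mul_I, inv_I]
    rw [← hI, ← exp_add]; push_cast; ring_nf
  have hs : ((Real.sin (θ / 2) : ℝ) : ℂ) = (exp (-(θ / 2 * I)) - exp (θ / 2 * I)) * I / 2 := by
    rw [ofReal_sin, Complex.sin]; push_cast; ring_nf
  rw [hu, hw, ofReal_mul, hs]
  push_cast
  linear_combination
    (-1 : ℂ) * hvu + (exp (-(θ / 2 * I)) - exp (θ / 2 * I)) * exp (θ / 2 * I) * I_sq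

theorem arg_one_sub_exp_mul_I {θ : ℝ} (h0 : 0 < θ) (h2π : θ < 2 * π) :
    arg (1 - exp (θ * I)) = (θ - π) / 2 := by
  have hsin : 0 < 2 * Real.sin (θ / 2) := by
    have := Real.sin_pos_of_pos_of_lt_pi (x := θ / 2) (by linarith) (by linarith); linarith
  rw [one_sub_exp_mul_I, exp_mul_I, arg_mul_cos_add_sin_mul_I hsin]
  constructor <;> linarith [Real.pi_pos]

theorem one_sub_mem_slitPlane_of_norm_eq_one {z : ℂ} (hz : ‖z‖ = 1) (h1 : z ≠ 1) :
    1 - z ∈ slitPlane := by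
  rw [mem_slitPlane_iff, sub_re, one_re, sub_im, one_im, zero_sub, neg_ne_zero, sub_pos]
  by_contra! h
  have hre : z.re = 1 := by
    have := abs_re_eq_norm.mpr h.2
    rw [hz] at this
    linarith [re_le_norm z, abs_le.mp this.le]
  exact h1 (ext hre (by simpa using h.2))

theorem cauchySeq_sum_range_pow_div {z : ℂ} (hz : ‖z‖ = 1) (h1 : z ≠ 1) :
    CauchySeq fun N ↦ ∑ n ∈ range N, z ^ n / n := by
  have hbound (N : ℕ) : ‖∑ i ∈ range N, z ^ (i + 1)‖ ≤ 2 / ‖z - 1‖ := by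
    simp_rw [pow_succ']
    rw [← mul_sum, geom_sum_eq h1, norm_mul, hz, one_mul, norm_div]
    gcongr
    exact (norm_sub_le _ _).trans (by simp [hz]; norm_num)
  have hanti : Antitone fun i : ℕ ↦ 1 / ((i : ℝ) + 1) := fun i j hij ↦ by
    dsimp only
    gcongr
  have := hanti.cauchySeq_series_mul_of_tendsto_zero_of_bounded
    tendsto_one_div_add_atTop_nhds_zero_nat hbound
  rw [← cauchySeq_shift 1]
  convert this using 2 with N
  rw [sum_range_succ']
  simp [div_eq_inv_mul]

theorem tendsto_tsum_pow_div_mul_pow_nhdsWithin_lt {z : ℂ} (hz : ‖z‖ ≤ 1)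
    (hslit : 1 - z ∈ slitPlane) :
    Tendsto (fun w ↦ ∑' n : ℕ, z ^ n / n * w ^ n) ((𝓝[<] (1 : ℝ)).map ofReal)
      (𝓝 (-log (1 - z))) := by
  have hcont : ContinuousAt (fun w ↦ -log (1 - z * w)) 1 :=
    ((continuousAt_const.sub (continuousAt_const.mul continuousAt_id)).clog
      (by simpa using hslit)).neg
  have hle : (𝓝[<] (1 : ℝ)).map ofReal ≤ 𝓝 1 :=
    (continuous_ofReal.tendsto' 1 1 ofReal_one).mono_left nhdsWithin_le_nhds
  refine (by simpa using hcont.tendsto.mono_left hle : Tendsto _ _ _).congr' ?_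
  rw [EventuallyEq, eventually_map]
  filter_upwards [Ioo_mem_nhdsLT (show (-1 : ℝ) < 1 by norm_num)] with x hx
  have hzx : ‖z * x‖ < 1 := by
    rw [norm_mul, norm_real, Real.norm_eq_abs]
    exact (mul_le_of_le_one_left (abs_nonneg x) hz).trans_lt (abs_lt.mpr hx)
  rw [← (hasSum_taylorSeries_neg_log hzx).tsum_eq]
  simp_rw [mul_pow, div_mul_eq_mul_div]

theorem tendsto_sum_range_pow_div {z : ℂ} (hz : ‖z‖ = 1) (h1 : z ≠ 1) :
    Tendsto (fun N ↦ ∑ n ∈ range N, z ^ n / n) atTop (𝓝 (-log (1 - z))) := by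
  obtain ⟨l, hl⟩ := cauchySeq_tendsto_of_complete (cauchySeq_sum_range_pow_div hz h1)
  have : (𝓝[<] (1 : ℝ)).map ofReal |>.NeBot := map_neBot
  rwa [tendsto_nhds_unique (tendsto_tsum_powerSeries_nhdsWithin_lt hl)
    (tendsto_tsum_pow_div_mul_pow_nhdsWithin_lt hz.le
      (one_sub_mem_slitPlane_of_norm_eq_one hz h1))] at hl

end Complex

namespace ZMod

variable {q : ℕ} [NeZero q]

theorem sum_val_eq_sum_range {M : Type*} [AddCommMonoid M] (g : ℕ → M) :
    ∑ x : ZMod q, g x.val = ∑ i ∈ range q, g i :=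
  sum_nbij' val (↑) (fun x _ ↦ mem_range.mpr (val_lt x)) (by simp)
    (fun x _ ↦ natCast_zmod_val x) (fun i hi ↦ val_cast_of_lt (mem_range.mp hi)) (by simp)

theorem sum_Icc_one_eq_sum_val {M : Type*} [AddCommMonoid M] {g : ℕ → M} (hg : g q = g 0) :
    ∑ a ∈ Icc 1 q, g a = ∑ x : ZMod q, g x.val := by
  rw [sum_val_eq_sum_range, sum_Icc_one_eq_sum_range_s7 hg]

theorem dft_comp_val_natCast {f : ℕ → ℂ} (hf : Function.Periodic f q) (b : ℕ) :
    𝓕 (fun x : ZMod q ↦ f x.val) b = ∑ a ∈ Icc 1 q, f a * exp (-2 * π * I * a * b / q) := by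
  have hq : (q : ℂ) ≠ 0 := NeZero.ne _
  rw [sum_Icc_one_eq_sum_val, dft_apply]
  · refine sum_congr rfl fun x _ ↦ ?_
    have : -(x * (b : ZMod q)) = ((-(x.val * b : ℕ) : ℤ) : ZMod q) := by
      push_cast; rw [natCast_zmod_val]
    rw [this, stdAddChar_coe, smul_eq_mul, mul_comm]
    push_cast; ring_nf
  · have : exp (-2 * π * I * q * b / q) = 1 := by
      have := exp_int_mul_two_pi_mul_I (-(b : ℤ))
      push_cast at this
      rw [← this]; congr 1; field_simp
    simp only [this, Nat.cast_zero, mul_zero, zero_mul, zero_div, Complex.exp_zero, mul_one]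
    simpa using hf 0

theorem _root_.Function.Periodic.eq_sum_dft_mul_stdAddChar_pow {f : ℕ → ℂ}
    (hf : Function.Periodic f q) (n : ℕ) :
    f n = ∑ k : ZMod q, ((q : ℂ)⁻¹ • 𝓕 (fun x ↦ f x.val)) k * stdAddChar k ^ n := by
  have := congr_fun ((dft (N := q)).symm_apply_apply (fun x ↦ f x.val)) n
  rw [invDFT_apply, val_natCast, hf.map_mod_nat] at this
  rw [← this, smul_eq_mul, mul_sum]
  refine sum_congr rfl fun k _ ↦ ?_
  rw [mul_comm k, ← nsmul_eq_mul, AddChar.map_nsmul_eq_pow, Pi.smul_apply, smul_eq_mul,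
    smul_eq_mul]
  ring

theorem odd_comp_val {β : Type*} [Neg β] {f : ℕ → β} (hf : Function.Periodic f q)
    (hodd : ∀ n ≤ q, f (q - n) = -f n) : (fun x : ZMod q ↦ f x.val).Odd := fun x ↦ by
  simp only [neg_val', hf.map_mod_nat, hodd _ (val_lt x).le]

theorem stdAddChar_eq_exp (k : ZMod q) :
    (stdAddChar k : ℂ) = exp (↑(2 * π * k.val / q) * I) := by
  rw [stdAddChar_apply, toCircle_apply]; push_cast; ring_nf

theorem norm_stdAddChar (k : ZMod q) : ‖(stdAddChar k : ℂ)‖ = 1 := Circle.norm_coe _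

theorem stdAddChar_ne_one {k : ZMod q} (hk : k ≠ 0) : (stdAddChar k : ℂ) ≠ 1 := by
  rw [← AddChar.map_zero_eq_one (stdAddChar (N := q))]; exact injective_stdAddChar.ne hk

theorem two_pi_mul_val_div_mem_Ioo {k : ZMod q} (hk : k ≠ 0) :
    2 * π * k.val / q ∈ Set.Ioo 0 (2 * π) := by
  have hq : (0 : ℝ) < q := by exact_mod_cast NeZero.pos q
  have hk0 : (0 : ℝ) < k.val := by exact_mod_cast val_pos.mpr hk
  have hkq : (k.val : ℝ) < q := by exact_mod_cast val_lt k
  refine ⟨by positivity, ?_⟩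
  rw [div_lt_iff₀ hq]
  nlinarith [Real.pi_pos]

theorem arg_one_sub_stdAddChar {k : ZMod q} (hk : k ≠ 0) :
    arg (1 - stdAddChar k) = (2 * π * k.val / q - π) / 2 := by
  obtain ⟨h0, h2π⟩ := two_pi_mul_val_div_mem_Ioo hk
  rw [stdAddChar_eq_exp, arg_one_sub_exp_mul_I h0 h2π]

theorem sum_mul_neg_log_one_sub_stdAddChar {Φ : ZMod q → ℂ} (hΦ : Φ.Odd) :
    ∑ k, Φ k * -log (1 - stdAddChar k) = -(I * π / q) * ∑ k, (k.val : ℂ) * Φ k := by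
  have hconj (k : ZMod q) : 1 - (stdAddChar (-k) : ℂ) = conj (1 - stdAddChar k) := by
    rw [AddChar.map_neg_eq_inv, inv_eq_conj (norm_stdAddChar k), map_sub, map_one]
  have hreflect : ∑ k, Φ k * -log (1 - stdAddChar k) =
      ∑ k, Φ k * log (conj (1 - stdAddChar k)) := by
    rw [← Equiv.sum_comp (Equiv.neg (ZMod q))]
    simp [hΦ.eq, hconj]
  have hterm (k : ZMod q) :
      Φ k * (log (conj (1 - stdAddChar k)) - log (1 - stdAddChar k)) =
        (π - 2 * π * k.val / q) * I * Φ k := by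
    rcases eq_or_ne k 0 with rfl | hk
    · simp [hΦ.map_zero]
    have harg := arg_one_sub_stdAddChar hk
    rw [log_conj_sub_log, harg]
    · push_cast; ring
    · rw [harg]
      linarith [(two_pi_mul_val_div_mem_Ioo hk).2, Real.pi_pos]
  calc ∑ k, Φ k * -log (1 - stdAddChar k)
      = (∑ k, Φ k * (log (conj (1 - stdAddChar k)) - log (1 - stdAddChar k))) / 2 := by
        simp_rw [mul_sub, sum_sub_distrib, ← hreflect, mul_neg, sum_neg_distrib]
        ring
    _ = (π * I * ∑ k, Φ k - 2 * π * I / q * ∑ k, (k.val : ℂ) * Φ k) / 2 := by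
        simp_rw [hterm, mul_sum, ← sum_sub_distrib]
        congr 1; refine sum_congr rfl fun k _ ↦ by ring
    _ = -(I * π / q) * ∑ k, (k.val : ℂ) * Φ k := by
        rw [hΦ.sum_eq_zero]; ring

theorem tendsto_sum_Icc_sum_mul_stdAddChar_pow_div {Φ : ZMod q → ℂ} (hΦ0 : Φ 0 = 0) :
    Tendsto (fun N : ℕ ↦ ∑ n ∈ Icc 1 N, (∑ k, Φ k * stdAddChar k ^ n) / n) atTop
      (𝓝 (∑ k, Φ k * -log (1 - stdAddChar k))) := by
  have hswap (N : ℕ) : ∑ n ∈ Icc 1 N, (∑ k, Φ k * stdAddChar k ^ n) / n =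
      ∑ k, Φ k * ∑ n ∈ range (N + 1), (stdAddChar k : ℂ) ^ n / n := by
    simp_rw [sum_range_succ_eq_add_sum_Icc, sum_div, mul_add, mul_sum, mul_div_assoc]
    rw [sum_comm]
    simp
  simp_rw [hswap]
  refine tendsto_finsetSum _ fun k _ ↦ ?_
  rcases eq_or_ne k 0 with rfl | hk
  · simp [hΦ0]
  exact ((tendsto_sum_range_pow_div (norm_stdAddChar k) (stdAddChar_ne_one hk)).comp
    (tendsto_add_atTop_nat 1)).const_mul _

end ZMod

theorem L_one_odd_periodic_general (q : ℕ) (hq : 0 < q) (f : ℕ → ℂ)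
    (hper : ∀ n : ℕ, f (n + q) = f n)
    (hodd : ∀ n : ℕ, n ≤ q → f (q - n) = -f n)
    (fhat : ℕ → ℂ)
    (hfhat : ∀ b : ℕ, fhat b = (1 / q) * ∑ a ∈ Finset.Icc 1 q,
        f a * Complex.exp (-2 * Real.pi * Complex.I * a * b / q)) :
    Tendsto (fun N : ℕ => ∑ n ∈ Finset.Icc 1 N, f n / n) atTop
      (𝓝 (-(Complex.I * Real.pi / q) * ∑ a ∈ Finset.Icc 1 q, (a : ℂ) * fhat a)) := by
  have : NeZero q := ⟨hq.ne'⟩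
  set Φ : ZMod q → ℂ := (q : ℂ)⁻¹ • 𝓕 (fun x ↦ f x.val) with hΦ_def
  have hΦ : Φ.Odd := (dft_odd_iff.mpr (odd_comp_val hper hodd)).const_smul _
  have hfhat_eq (b : ℕ) : fhat b = Φ b := by
    rw [hfhat, hΦ_def, Pi.smul_apply, smul_eq_mul, dft_comp_val_natCast hper, one_div]
  have hweights : ∑ a ∈ Icc 1 q, (a : ℂ) * fhat a = ∑ k, (k.val : ℂ) * Φ k := by
    rw [sum_Icc_one_eq_sum_val (by simp [hfhat_eq, hΦ.map_zero])]
    simp only [hfhat_eq, natCast_zmod_val]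
  rw [hweights, ← sum_mul_neg_log_one_sub_stdAddChar hΦ]
  convert tendsto_sum_Icc_sum_mul_stdAddChar_pow_div hΦ.map_zero using 4 with N n
  exact Function.Periodic.eq_sum_dft_mul_stdAddChar_pow hper n

/-- For an odd `q`-periodic function `f` with `f q = 0` and `f̂ q = 0`,
`L(1,f) = ∑_{n≥1} f n / n = -(iπ/q) ∑_{a=1}^q a · f̂ a`. -/
theorem L_one_odd_periodic (q : ℕ) (hq : 0 < q) (f : ℕ → ℂ)
    (hper : ∀ n : ℕ, f (n + q) = f n)
    (hodd : ∀ n : ℕ, n ≤ q → f (q - n) = -f n)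
    (fhat : ℕ → ℂ)
    (hfhat : ∀ b : ℕ, fhat b = (1 / q) * ∑ a ∈ Finset.Icc 1 q,
        f a * Complex.exp (-2 * Real.pi * Complex.I * a * b / q))
    (hfq : f q = 0) (hfhatq : fhat q = 0) :
    Tendsto (fun N : ℕ => ∑ n ∈ Finset.Icc 1 N, f n / n) atTop
      (𝓝 (-(Complex.I * Real.pi / q) * ∑ a ∈ Finset.Icc 1 q, (a : ℂ) * fhat a)) :=
  L_one_odd_periodic_general q hq f hper hodd fhat hfhat
end

section
/- Let f be an even q-periodic arithmetical function (f(q-n) = f(n)). Then L(s,f) satisfies the functional equation L(1-s, f) = 2 Γ(s) (q/(2π))^s cos(πs/2) L(s, f̂), where f̂ is the Fourier transform of f. -/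
/-!
A `q`-periodic `f` factors through a function `Φ` on `ZMod q`, and `L(s, f)` and `L(s, f̂)` are
the `ZMod.LFunction`s of `Φ` and of `q⁻¹ 𝓕 Φ`. The general functional equation
`ZMod.LFunction_one_sub` pairs `𝓕 Φ` with `e^{πis/2}` and `𝓕 (Φ ∘ neg)` with `e^{-πis/2}`;
for even `Φ` these two transforms agree and the exponentials sum to `2 cos (πs/2)`.
-/

open Finset Complex ZMod HurwitzZeta Real

theorem Function.Periodic.map_val_intCast {α : Type*} {f : ℤ → α} {N : ℕ} [NeZero N]
    (hf : Function.Periodic f N) (a : ℤ) : f ((a : ZMod N).val) = f a := by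
  rw [ZMod.val_intCast, Int.emod_def]
  simpa [mul_comm] using hf.sub_int_mul_eq (x := a) (a / N)

namespace ZMod

variable {N : ℕ} [NeZero N]

theorem sum_range_natCast {M : Type*} [AddCommMonoid M] (G : ZMod N → M) :
    ∑ k ∈ range N, G k = ∑ j, G j :=
  sum_nbij' (↑) val (fun _ _ ↦ mem_univ _) (fun j _ ↦ mem_range.2 (val_lt j))
    (fun _ hk ↦ val_natCast_of_lt (mem_range.1 hk)) (fun j _ ↦ natCast_zmod_val j) fun _ _ ↦ rfl

theorem sum_Icc_one_natCast {M : Type*} [AddCommMonoid M] (G : ZMod N → M) :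
    ∑ a ∈ Icc 1 N, G a = ∑ j, G j := by
  rw [← Ico_add_one_right_eq_Icc, sum_Ico_eq_sum_range, Nat.add_sub_cancel]
  push_cast
  exact (sum_range_natCast fun j ↦ G (1 + j)).trans (Equiv.sum_comp (Equiv.addLeft 1) G)

theorem LFunction_one_sub_of_even {Φ : ZMod N → ℂ} (hΦ : Φ.Even) {s : ℂ}
    (hs : ∀ n : ℕ, s ≠ -n) (hs' : Φ 0 = 0 ∨ s ≠ 1) :
    LFunction Φ (1 - s) =
      N ^ (s - 1) * (2 * π) ^ (-s) * Gamma s * (2 * cos (π * s / 2)) * LFunction (𝓕 Φ) s := by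
  have hneg : (fun x ↦ Φ (-x)) = Φ := funext hΦ
  rw [LFunction_one_sub Φ hs hs', hneg, ← add_mul, two_cos]
  ring_nf

theorem dft_intCast_eq_sum_Icc {g : ℤ → ℂ} {Φ : ZMod N → ℂ} (hg : ∀ a : ℤ, g a = Φ a) (b : ℤ) :
    𝓕 Φ b = ∑ a ∈ Icc 1 N, g a * exp (-2 * π * I * a * b / N) := by
  rw [dft_apply, ← sum_Icc_one_natCast]
  refine sum_congr rfl fun a _ ↦ ?_
  rw [hg, Int.cast_natCast, smul_eq_mul, mul_comm, ← Int.cast_natCast a, ← Int.cast_mul,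
    ← Int.cast_neg, stdAddChar_coe]
  push_cast
  ring_nf

theorem LFunction_const_mul (c : ℂ) (Φ : ZMod N → ℂ) (s : ℂ) :
    LFunction (fun j ↦ c * Φ j) s = c * LFunction Φ s := by
  simp only [LFunction, mul_sum, mul_assoc, mul_left_comm c]

theorem LFunction_eq_sum_Icc_mul_hurwitzZeta {g : ℤ → ℂ} {Φ : ZMod N → ℂ}
    (hg : ∀ a : ℤ, g a = Φ a) (s : ℂ) :
    LFunction Φ s = (N : ℂ) ^ (-s) * ∑ a ∈ Icc 1 N, g a * hurwitzZeta ↑((a : ℝ) / N) s := by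
  simp_rw [LFunction, ← sum_Icc_one_natCast, toAddCircle_natCast, hg, Int.cast_natCast]

end ZMod

/-- Functional equation for the `L`-series of an even `q`-periodic function:
`L(1-s, f) = 2 Γ(s) (q/2π)^s cos(πs/2) L(s, f̂)`. -/
theorem functional_equation_even (q : ℕ) (hq : 0 < q) (f : ℤ → ℂ)
    (hper : ∀ n : ℤ, f (n + q) = f n)
    (heven : ∀ n : ℤ, f (q - n) = f n)
    (fhat : ℤ → ℂ)
    (hfhat : ∀ b : ℤ, fhat b = (1 / q) * ∑ a ∈ Finset.Icc 1 q,
        f a * Complex.exp (-2 * Real.pi * Complex.I * a * b / q))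
    (L : (ℤ → ℂ) → ℂ → ℂ)
    (hL : ∀ (g : ℤ → ℂ) (s : ℂ), L g s = (q : ℂ) ^ (-s) * ∑ a ∈ Finset.Icc 1 q,
        g a * hurwitzZeta (↑((a : ℝ) / q) : UnitAddCircle) s)
    (s : ℂ) (hs : ∀ n : ℕ, s ≠ -n) (hs1 : s ≠ 1) :
    L f (1 - s) = 2 * Complex.Gamma s * ((q : ℂ) / (2 * Real.pi)) ^ s *
      Complex.cos (Real.pi * s / 2) * L fhat s := by
  have : NeZero q := ⟨hq.ne'⟩
  set Φ : ZMod q → ℂ := fun j ↦ f j.val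
  have hfΦ (a : ℤ) : f a = Φ a := ((Function.Periodic.map_val_intCast hper) a).symm
  have hΦ : Φ.Even := fun j ↦ by simpa [hfΦ] using heven j.val
  have hfhatΦ (b : ℤ) : fhat b = (q : ℂ)⁻¹ * 𝓕 Φ b := by
    rw [hfhat, dft_intCast_eq_sum_Icc hfΦ, one_div]
  have hLf : L f (1 - s) = LFunction Φ (1 - s) := by
    rw [hL, LFunction_eq_sum_Icc_mul_hurwitzZeta hfΦ]
  have hLfhat : L fhat s = (q : ℂ)⁻¹ * LFunction (𝓕 Φ) s := by
    rw [hL, ← LFunction_const_mul, LFunction_eq_sum_Icc_mul_hurwitzZeta hfhatΦ]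
  have hpow : ((q : ℂ) / (2 * π)) ^ s = (q : ℂ) ^ s / (2 * π) ^ s := by
    exact_mod_cast div_cpow_ofReal_nonneg q.cast_nonneg two_pi_pos.le s
  rw [hLf, hLfhat, LFunction_one_sub_of_even hΦ hs (Or.inr hs1), hpow,
    cpow_sub _ _ (Nat.cast_ne_zero.2 hq.ne'), cpow_one, cpow_neg]
  ring
end

section
/- For natural numbers a ≤ q and k ≥ 0, the limit γ_k(a,q) := lim_{x→∞} ( ∑_{n ≤ x, n ≡ a mod q} (log^k n)/n − (log^{k+1} x)/(q(k+1)) ) exists. -/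
/-!
On `[e^k, ∞)` the function `log^k t / t` is nonnegative, decreasing and tends to `0`, and it is the
derivative of `log^{k+1} t / (k+1)`. For any such pair `ψ = Ψ'`, the mean value theorem squeezes
each increment `Ψ (m+1) - Ψ m` between `ψ (m+1)` and `ψ m`, so `∑_{j ≤ m} ψ j - Ψ m` is eventually
decreasing and bounded below, hence convergent; interpolating between integers costs at most
`ψ ⌊t⌋`, which tends to `0`. The residue class `n ≡ a (mod q)` is the progression `a + jq`,
reduced to this case by the substitution `t = (x - a) / q`.
-/

open Finset Filter Topology

section IntegralComparison

variable {ψ Ψ : ℝ → ℝ} {c : ℝ}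

lemma AntitoneOn.nonneg_of_tendsto_zero (hψ : AntitoneOn ψ (Set.Ici c))
    (h0 : Tendsto ψ atTop (𝓝 0)) {x : ℝ} (hx : c ≤ x) : 0 ≤ ψ x :=
  le_of_tendsto h0 <| (eventually_ge_atTop x).mono fun _ hy => hψ hx (hx.trans hy) hy

lemma image_sub_mem_Icc_of_antitoneOn_deriv (hψ : AntitoneOn ψ (Set.Ici c))
    (hΨ : ∀ x ≥ c, HasDerivAt Ψ (ψ x) x) {s t : ℝ} (hs : c ≤ s) (hst : s ≤ t) :
    Ψ t - Ψ s ∈ Set.Icc (ψ t * (t - s)) (ψ s * (t - s)) := by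
  have hderiv : ∀ x ∈ Set.Icc s t, HasDerivAt Ψ (ψ x) x := fun x hx => hΨ x (hs.trans hx.1)
  have hcont : ContinuousOn Ψ (Set.Icc s t) := fun x hx =>
    (hderiv x hx).continuousAt.continuousWithinAt
  have hdiff : DifferentiableOn ℝ Ψ (interior (Set.Icc s t)) := fun x hx =>
    (hderiv x (interior_subset hx)).differentiableAt.differentiableWithinAt
  have hmem : ∀ x ∈ Set.Icc s t, x ∈ Set.Ici c := fun x hx => hs.trans hx.1
  constructor
  · refine (convex_Icc s t).mul_sub_le_image_sub_of_le_deriv hcont hdiff (fun x hx => ?_)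
      s (Set.left_mem_Icc.2 hst) t (Set.right_mem_Icc.2 hst) hst
    have hx := interior_subset hx
    rw [(hderiv x hx).deriv]
    exact hψ (hmem x hx) (hmem t (Set.right_mem_Icc.2 hst)) hx.2
  · refine (convex_Icc s t).image_sub_le_mul_sub_of_deriv_le hcont hdiff (fun x hx => ?_)
      s (Set.left_mem_Icc.2 hst) t (Set.right_mem_Icc.2 hst) hst
    have hx := interior_subset hx
    rw [(hderiv x hx).deriv]
    exact hψ hs (hmem x hx) hx.1

lemma exists_tendsto_sum_range_sub {u F : ℕ → ℝ} {m₀ : ℕ} (hu : ∀ m ≥ m₀, 0 ≤ u m)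
    (hF : ∀ m ≥ m₀, u (m + 1) ≤ F (m + 1) - F m ∧ F (m + 1) - F m ≤ u m) :
    ∃ l, Tendsto (fun m => ∑ j ∈ range (m + 1), u j - F m) atTop (𝓝 l) := by
  set G : ℕ → ℝ := fun m => ∑ j ∈ range (m + 1), u j - F m
  have hG_succ : ∀ m, G (m + 1) = G m + u (m + 1) - (F (m + 1) - F m) := fun m => by
    simp only [G, sum_range_succ _ (m + 1)]
    ring
  have hanti : Antitone fun n => G (n + m₀) := antitone_nat_of_succ_le fun n => by
    rw [add_right_comm, hG_succ]
    linarith [(hF (n + m₀) (by omega)).1]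
  have hmono : Monotone fun n => G (n + m₀) - u (n + m₀) := monotone_nat_of_le_succ fun n => by
    rw [add_right_comm, hG_succ]
    linarith [(hF (n + m₀) (by omega)).2]
  have hbdd : BddBelow (Set.range fun n => G (n + m₀)) := by
    refine ⟨G (0 + m₀) - u (0 + m₀), ?_⟩
    rintro _ ⟨n, rfl⟩
    linarith [hmono (Nat.zero_le n), hu (n + m₀) (by omega)]
  exact ⟨_, (tendsto_add_atTop_iff_nat m₀).1 (tendsto_atTop_ciInf hanti hbdd)⟩

theorem exists_tendsto_sum_range_floor_sub (hψ : AntitoneOn ψ (Set.Ici c))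
    (h0 : Tendsto ψ atTop (𝓝 0)) (hΨ : ∀ x ≥ c, HasDerivAt Ψ (ψ x) x) :
    ∃ l, Tendsto (fun t => ∑ j ∈ range (⌊t⌋₊ + 1), ψ j - Ψ t) atTop (𝓝 l) := by
  obtain ⟨l, hl⟩ : ∃ l, Tendsto (fun m : ℕ => ∑ j ∈ range (m + 1), ψ j - Ψ m) atTop (𝓝 l) := by
    refine exists_tendsto_sum_range_sub (m₀ := ⌈c⌉₊)
      (fun m hm => hψ.nonneg_of_tendsto_zero h0 (Nat.ceil_le.1 hm)) fun m hm => ?_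
    have h := image_sub_mem_Icc_of_antitoneOn_deriv hψ hΨ (Nat.ceil_le.1 hm)
      (le_add_of_nonneg_right zero_le_one)
    push_cast
    simpa using h
  have hfloor : Tendsto (fun t : ℝ => (⌊t⌋₊ : ℝ)) atTop atTop :=
    tendsto_natCast_atTop_atTop.comp tendsto_nat_floor_atTop
  have hbounds : ∀ᶠ t in atTop, 0 ≤ Ψ t - Ψ ⌊t⌋₊ ∧ Ψ t - Ψ ⌊t⌋₊ ≤ ψ ⌊t⌋₊ := by
    filter_upwards [hfloor.eventually_ge_atTop c, eventually_ge_atTop 0] with t hc ht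
    have hlt : t - ⌊t⌋₊ < 1 := by linarith [Nat.lt_floor_add_one t]
    have hle : 0 ≤ t - ⌊t⌋₊ := sub_nonneg.2 (Nat.floor_le ht)
    obtain ⟨hlow, hup⟩ := image_sub_mem_Icc_of_antitoneOn_deriv hψ hΨ hc (Nat.floor_le ht)
    have hψt := hψ.nonneg_of_tendsto_zero h0 (hc.trans (Nat.floor_le ht))
    have hψf := hψ.nonneg_of_tendsto_zero h0 hc
    exact ⟨(mul_nonneg hψt hle).trans hlow, hup.trans (mul_le_of_le_one_right hψf hlt.le)⟩
  have herr : Tendsto (fun t => Ψ t - Ψ ⌊t⌋₊) atTop (𝓝 0) :=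
    tendsto_of_tendsto_of_tendsto_of_le_of_le' tendsto_const_nhds (h0.comp hfloor)
      (hbounds.mono fun _ h => h.1) (hbounds.mono fun _ h => h.2)
  refine ⟨l, ?_⟩
  simpa using (hl.comp tendsto_nat_floor_atTop).sub herr

theorem exists_tendsto_sum_progression_sub {φ Φ : ℝ → ℝ} (hφ : AntitoneOn φ (Set.Ici c))
    (h0 : Tendsto φ atTop (𝓝 0)) (hΦ : ∀ x ≥ c, HasDerivAt Φ (φ x) x) (a : ℝ) {q : ℝ}
    (hq : 0 < q) :
    ∃ l, Tendsto (fun x => ∑ j ∈ range (⌊(x - a) / q⌋₊ + 1), φ (a + j * q) - Φ x / q)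
      atTop (𝓝 l) := by
  have hmem : ∀ {t}, (c - a) / q ≤ t → c ≤ a + t * q := fun ht => by
    linarith [(div_le_iff₀ hq).1 ht]
  obtain ⟨l, hl⟩ := exists_tendsto_sum_range_floor_sub (c := (c - a) / q)
    (ψ := fun t => φ (a + t * q)) (Ψ := fun t => Φ (a + t * q) / q)
    (fun s hs t ht hst => hφ (hmem hs) (hmem ht) (by gcongr))
    (h0.comp (tendsto_atTop_add_const_left _ a (tendsto_id.atTop_mul_const hq)))
    (fun t ht => (((hΦ _ (hmem ht)).comp t (((hasDerivAt_id' t).mul_const q).const_add a)).div_const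
      q).congr_deriv (by field_simp))
  refine ⟨l, (hl.comp (Tendsto.atTop_div_const hq (tendsto_atTop_add_const_right _ (-a)
    tendsto_id))).congr fun x => ?_⟩
  simp [sub_eq_add_neg, div_mul_cancel₀ _ hq.ne']

end IntegralComparison

lemma Real.antitoneOn_log_pow_div_self (k : ℕ) :
    AntitoneOn (fun x => Real.log x ^ k / x) (Set.Ici (Real.exp k)) := by
  rcases k.eq_zero_or_pos with rfl | hk
  · simp only [pow_zero, one_div, CharP.cast_eq_zero, Real.exp_zero]
    exact fun x hx y _ hxy => inv_anti₀ (zero_lt_one.trans_le hx) hxy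
  intro x hx y hy hxy
  have hroot : ∀ z, 0 < z → Real.log z ^ k / z = (Real.log z / z ^ (k : ℝ)⁻¹) ^ k := fun z hz => by
    rw [div_pow, ← Real.rpow_natCast (z ^ _), ← Real.rpow_mul hz.le,
      inv_mul_cancel₀ (by positivity), Real.rpow_one]
  have hexp : Real.exp ((k : ℝ)⁻¹)⁻¹ = Real.exp k := by rw [inv_inv]
  have hx0 := (Real.exp_pos k).trans_le hx
  have hy0 := hx0.trans_le hxy
  have hlog : 0 ≤ Real.log y :=
    Real.log_nonneg ((Real.one_le_exp (Nat.cast_nonneg k)).trans (hx.trans hxy))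
  simp only
  rw [hroot x hx0, hroot y hy0]
  exact pow_le_pow_left₀ (by positivity)
    (Real.log_div_self_rpow_antitoneOn (by positivity) (hexp ▸ hx) (hexp ▸ hy) hxy) k

lemma Real.hasDerivAt_log_pow_succ_div (k : ℕ) {x : ℝ} (hx : 0 < x) :
    HasDerivAt (fun t => Real.log t ^ (k + 1) / (k + 1)) (Real.log x ^ k / x) x := by
  refine (((Real.hasDerivAt_log hx.ne').fun_pow (k + 1)).div_const ((k : ℝ) + 1)).congr_deriv ?_
  push_cast
  field_simp

lemma Nat.sum_filter_mod_eq_sum_range {M : Type*} [AddCommMonoid M] (g : ℕ → M) {a q N : ℕ}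
    (ha : 1 ≤ a) (haq : a ≤ q) (hN : a ≤ N) :
    ∑ n ∈ (Icc 1 N).filter (· % q = a % q), g n = ∑ j ∈ range ((N - a) / q + 1), g (a + j * q) := by
  have hq : 0 < q := by omega
  have hprog : ∀ n, 1 ≤ n → n % q = a % q → a ≤ n ∧ q ∣ n - a := fun n hn hmod => by
    have han : a ≤ n := by
      by_contra! hna
      rcases haq.lt_or_eq with haq | rfl
      · rw [Nat.mod_eq_of_lt (hna.trans haq), Nat.mod_eq_of_lt haq] at hmod
        omega
      · rw [Nat.mod_eq_of_lt hna, Nat.mod_self] at hmod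
        omega
    exact ⟨han, (Nat.modEq_iff_dvd' han).1 hmod.symm⟩
  symm
  refine sum_nbij' (fun j => a + j * q) (fun n => (n - a) / q) (fun j hj => ?_) (fun n hn => ?_)
    (fun j _ => ?_) (fun n hn => ?_) (fun _ _ => rfl)
  · simp only [mem_range, Nat.lt_succ_iff, Nat.le_div_iff_mul_le hq] at hj
    simp only [mem_filter, mem_Icc, Nat.add_mul_mod_self_right, and_true]
    constructor <;> omega
  · simp only [mem_filter, mem_Icc] at hn
    simp only [mem_range, Nat.lt_succ_iff]
    exact Nat.div_le_div_right (by omega)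
  · simp [Nat.mul_div_cancel _ hq]
  · simp only [mem_filter, mem_Icc] at hn
    obtain ⟨han, hdvd⟩ := hprog n hn.1.1 hn.2
    rw [Nat.div_mul_cancel hdvd]
    omega

theorem generalized_stieltjes_exists_general (q a k : ℕ) (ha : 1 ≤ a) (haq : a ≤ q) :
    ∃ l : ℝ, Tendsto (fun x : ℝ =>
      (∑ n ∈ (Finset.Icc 1 ⌊x⌋₊).filter (fun n => n % q = a % q),
        (Real.log n) ^ k / n) - (Real.log x) ^ (k + 1) / (q * (k + 1)))
      atTop (𝓝 l) := by
  obtain ⟨l, hl⟩ := exists_tendsto_sum_progression_sub (Real.antitoneOn_log_pow_div_self k)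
    (by simpa using Real.tendsto_pow_log_div_mul_add_atTop 1 0 k one_ne_zero)
    (fun x hx => Real.hasDerivAt_log_pow_succ_div k ((Real.exp_pos k).trans_le hx)) a
    (Nat.cast_pos.2 (show 0 < q by omega))
  refine ⟨l, hl.congr' ?_⟩
  filter_upwards [eventually_ge_atTop (a : ℝ)] with x hx
  rw [Nat.sum_filter_mod_eq_sum_range _ ha haq (Nat.le_floor hx), Nat.floor_div_natCast,
    Nat.floor_sub_natCast]
  push_cast
  rw [div_div, mul_comm ((k : ℝ) + 1)]

/-- The generalized Stieltjes constant `γ_k(a,q)` exists: the limit as `x → ∞` of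
`∑_{n ≤ x, n ≡ a mod q} (log n)^k / n − (log x)^{k+1} / (q(k+1))`. -/
theorem generalized_stieltjes_exists (q a k : ℕ) (hq : 0 < q) (ha : 1 ≤ a) (haq : a ≤ q) :
    ∃ l : ℝ, Tendsto (fun x : ℝ =>
      (∑ n ∈ (Finset.Icc 1 ⌊x⌋₊).filter (fun n => n % q = a % q),
        (Real.log n) ^ k / n) - (Real.log x) ^ (k + 1) / (q * (k + 1)))
      atTop (𝓝 l) :=
  generalized_stieltjes_exists_general q a k ha haq
end

section
/- Let p be a prime and let f_j be the p-periodic odd function equal to 1 at residues ≡ j mod p and -1 at residues ≡ -j mod p, zero otherwise (1 ≤ j ≤ (p-1)/2). Then L(1,f_j) = ∑_{n=1}^∞ f_j(n)/n ≠ 0. -/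
open Finset Filter Topology

/-!
Group the series into blocks of `p` consecutive terms. The `k`-th block contributes exactly
`1 / (k p + j) - 1 / (k p + p - j)`, which is positive because `2 j < p` and is `O(1 / k²)`.
Hence the block sums form a convergent series with positive sum, and since the individual terms
`f_j(n) / n` tend to `0`, the partial sums of the original series converge to the same value.
-/

theorem sum_range_mul_eq_sum_blocks {M : Type*} [AddCommMonoid M] (u : ℕ → M) (q K : ℕ) :
    ∑ n ∈ range (K * q), u n = ∑ k ∈ range K, ∑ i ∈ range q, u (k * q + i) := by
  induction K with
  | zero => simp
  | succ K ih => rw [Nat.succ_mul, sum_range_add, ih, sum_range_succ]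

theorem sum_Icc_one_eq_sum_range_succ {M : Type*} [AddCommMonoid M] {u : ℕ → M} (h0 : u 0 = 0)
    (N : ℕ) : ∑ n ∈ Icc 1 N, u n = ∑ n ∈ range (N + 1), u n := by
  refine sum_subset (fun n hn => ?_) fun n hN hn => ?_
  · simp only [mem_Icc, mem_range] at hn ⊢; omega
  · obtain rfl : n = 0 := by simp only [mem_Icc, mem_range] at hN hn; omega
    exact h0

theorem tendsto_sum_range_of_hasSum_blocks {E : Type*} [NormedAddCommGroup E]
    {u : ℕ → E} {q : ℕ} {l : E} (hq : 0 < q) (hu : Tendsto u atTop (𝓝 0))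
    (h : HasSum (fun k => ∑ i ∈ range q, u (k * q + i)) l) :
    Tendsto (fun N => ∑ n ∈ range N, u n) atTop (𝓝 l) := by
  have hdiv : Tendsto (· / q) atTop atTop := Nat.tendsto_div_const_atTop hq.ne'
  have hsplit : ∀ N, ∑ n ∈ range N, u n =
      ∑ n ∈ range (N / q * q), u n + ∑ i ∈ range (N % q), u (N / q * q + i) := by
    intro N
    conv_lhs => rw [← Nat.div_add_mod' N q]
    exact sum_range_add u _ _
  have hfull : Tendsto (fun N => ∑ n ∈ range (N / q * q), u n) atTop (𝓝 l) := by
    simp_rw [sum_range_mul_eq_sum_blocks]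
    exact h.tendsto_sum_nat.comp hdiv
  have hblock : Tendsto (fun K => ∑ i ∈ range q, ‖u (K * q + i)‖) atTop (𝓝 0) := by
    rw [← sum_const_zero (s := range q)]
    refine tendsto_finsetSum _ fun i _ => ?_
    refine (tendsto_norm_zero.comp hu).comp ?_
    exact tendsto_atTop_mono (fun K => (Nat.le_mul_of_pos_right K hq).trans (Nat.le_add_right _ _))
      tendsto_id
  have hrest : Tendsto (fun N => ∑ i ∈ range (N % q), u (N / q * q + i)) atTop (𝓝 0) := by
    refine squeeze_zero_norm (fun N => (norm_sum_le _ _).trans ?_) (hblock.comp hdiv)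
    exact sum_le_sum_of_subset_of_nonneg (range_subset_range.2 (Nat.mod_lt N hq).le)
      fun _ _ _ => norm_nonneg _
  simpa only [add_zero] using (hfull.add hrest).congr fun N => (hsplit N).symm

theorem summable_one_div_sub_one_div {q a b : ℕ} (hq : 0 < q) (ha : 0 < a) (hab : a ≤ b) :
    Summable fun k : ℕ => 1 / ((k * q + a : ℕ) : ℝ) - 1 / ((k * q + b : ℕ) : ℝ) := by
  have hsq : Summable fun k : ℕ => (b - a : ℝ) * (1 / ((k + 1 : ℕ) : ℝ) ^ 2) := by
    refine Summable.mul_left _ ?_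
    exact_mod_cast (summable_nat_add_iff 1).2 (Real.summable_one_div_nat_pow.2 one_lt_two)
  refine hsq.of_nonneg_of_le (fun k => ?_) (fun k => ?_)
  · exact sub_nonneg.2 (one_div_le_one_div_of_le (by positivity) (by gcongr))
  · have hk : ((k + 1 : ℕ) : ℝ) ≤ ((k * q + a : ℕ) : ℝ) := by
      exact_mod_cast (by nlinarith : k + 1 ≤ k * q + a)
    have hkb : ((k * q + a : ℕ) : ℝ) ≤ ((k * q + b : ℕ) : ℝ) := by gcongr
    have hk0 : (0 : ℝ) < ((k + 1 : ℕ) : ℝ) := by positivity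
    have hx0 : (0 : ℝ) < ((k * q + a : ℕ) : ℝ) := hk0.trans_le hk
    rw [div_sub_div _ _ hx0.ne' (hx0.trans_le hkb).ne', mul_one_div]
    refine div_le_div₀ (sub_nonneg.2 (by exact_mod_cast hab)) (le_of_eq (by push_cast; ring))
      (by positivity) ?_
    rw [sq]
    exact mul_le_mul hk (hk.trans hkb) hk0.le (by positivity)

def fj (p j : ℕ) (n : ℤ) : ℂ :=
  if (n : ZMod p) = (j : ZMod p) then 1 else if (n : ZMod p) = -(j : ZMod p) then -1 else 0

theorem norm_fj_le_one (p j : ℕ) (n : ℤ) : ‖fj p j n‖ ≤ 1 := by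
  unfold fj; split_ifs <;> simp

theorem tendsto_fj_div_natCast (p j : ℕ) :
    Tendsto (fun n : ℕ => fj p j n / n) atTop (𝓝 0) := by
  refine squeeze_zero_norm (fun n => ?_) tendsto_one_div_atTop_nhds_zero_nat
  rw [norm_div, Complex.norm_natCast]
  exact div_le_div_of_nonneg_right (norm_fj_le_one p j n) n.cast_nonneg

theorem fj_natCast_mul_add {p j : ℕ} (hj : 0 < j) (hjp : j < p) (k : ℕ) {i : ℕ} (hi : i < p) :
    fj p j ((k * p + i : ℕ) : ℤ) = if i = j then 1 else if i = p - j then -1 else 0 := by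
  have hcast : (((k * p + i : ℕ) : ℤ) : ZMod p) = (i : ZMod p) := by simp
  have hnat : ∀ {m : ℕ}, m < p → ((i : ZMod p) = m ↔ i = m) := fun hm => by
    rw [ZMod.natCast_eq_natCast_iff', Nat.mod_eq_of_lt hi, Nat.mod_eq_of_lt hm]
  have hneg : -(j : ZMod p) = ((p - j : ℕ) : ZMod p) := by
    rw [Nat.cast_sub hjp.le, ZMod.natCast_self, zero_sub]
  simp only [fj, hcast, hneg, hnat hjp, hnat (Nat.sub_lt (hj.trans hjp) hj)]

theorem sum_fj_div_block {p j : ℕ} (hj : 0 < j) (h2j : 2 * j < p) (k : ℕ) :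
    ∑ i ∈ range p, fj p j ((k * p + i : ℕ) : ℤ) / ((k * p + i : ℕ) : ℂ) =
      1 / ((k * p + j : ℕ) : ℂ) - 1 / ((k * p + (p - j) : ℕ) : ℂ) := by
  have hjp : j < p := by omega
  have hpj : p - j < p := by omega
  rw [sum_eq_add j (p - j) (by omega) (fun i hi hij => ?_) (absurd (mem_range.2 hjp))
    (absurd (mem_range.2 hpj))]
  · rw [fj_natCast_mul_add hj hjp k hjp, fj_natCast_mul_add hj hjp k hpj, if_pos rfl,
      if_neg (by omega), if_pos rfl, neg_div, ← sub_eq_add_neg]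
  · rw [fj_natCast_mul_add hj hjp k (mem_range.1 hi), if_neg hij.1, if_neg hij.2, zero_div]

theorem L_one_fj_ne_zero_general (p : ℕ)
    (j : ℕ) (hj1 : 1 ≤ j) (hj2 : j ≤ (p - 1) / 2)
    (f : ℤ → ℂ)
    (hf : ∀ n : ℤ, f n =
      if (n : ZMod p) = (j : ZMod p) then 1
      else if (n : ZMod p) = -(j : ZMod p) then -1 else 0) :
    ∃ l : ℂ, l ≠ 0 ∧
      Tendsto (fun N : ℕ => ∑ n ∈ Finset.Icc 1 N, f n / n) atTop (𝓝 l) := by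
  obtain rfl : f = fj p j := funext hf
  have h2j : 2 * j < p := by omega
  set a : ℕ → ℝ := fun k => 1 / ((k * p + j : ℕ) : ℝ) - 1 / ((k * p + (p - j) : ℕ) : ℝ)
  have ha : Summable a := summable_one_div_sub_one_div (by omega) hj1 (by omega)
  have ha_pos : ∀ k, 0 < a k := fun k =>
    sub_pos.2 (one_div_lt_one_div_of_lt (by positivity) (by gcongr; omega))
  refine ⟨((∑' k, a k : ℝ) : ℂ),
    Complex.ofReal_ne_zero.2 (ha.tsum_pos (fun k => (ha_pos k).le) 0 (ha_pos 0)).ne', ?_⟩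
  have hblocks : HasSum (fun k => ∑ i ∈ range p,
      fj p j ((k * p + i : ℕ) : ℤ) / ((k * p + i : ℕ) : ℂ)) (∑' k, a k : ℝ) := by
    simp_rw [sum_fj_div_block hj1 h2j]
    convert Complex.hasSum_ofReal.2 ha.hasSum using 2 with k
    simp [a]
  have hpartial := tendsto_sum_range_of_hasSum_blocks (by omega) (tendsto_fj_div_natCast p j)
    hblocks
  simpa only [sum_Icc_one_eq_sum_range_succ (u := fun n : ℕ => fj p j n / n) (by simp)]
    using (tendsto_add_atTop_iff_nat 1).2 hpartial

/-- For an odd prime `p` and `1 ≤ j ≤ (p-1)/2`, the `L`-series at `1` of the odd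
`p`-periodic function `f_j` (equal to `1` on residues `≡ j`, `-1` on residues `≡ -j`,
`0` otherwise) converges and is nonzero. -/
theorem L_one_fj_ne_zero (p : ℕ) (hp : p.Prime) (hp2 : 2 < p)
    (j : ℕ) (hj1 : 1 ≤ j) (hj2 : j ≤ (p - 1) / 2)
    (f : ℤ → ℂ)
    (hf : ∀ n : ℤ, f n =
      if (n : ZMod p) = (j : ZMod p) then 1
      else if (n : ZMod p) = -(j : ZMod p) then -1 else 0) :
    ∃ l : ℂ, l ≠ 0 ∧
      Tendsto (fun N : ℕ => ∑ n ∈ Finset.Icc 1 N, f n / n) atTop (𝓝 l) :=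
  L_one_fj_ne_zero_general p j hj1 hj2 f hf
end
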